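/- arXiv:2004.01874 — 2 statements merged into one kernel-verified Lean document; each statement's English description precedes it below -/
import Mathlib

section
/- Let a, D, μ, r be real numbers with 0 < a < r, D > 0 and μ > 0. Then the improper integral of the degradation-weighted hitting rate converges and satisfies ∫₀^∞ (a/r) · ((r − a)/√(4π D τ³)) · exp(−(r − a)²/(4 D τ)) · exp(−μ τ) dτ = (a/r) · exp(−√(μ/D) · (r − a)). (In the paper's notation, f(∞, r) = (a/r) exp(−√(μ/D)(r − a)), the fraction of molecules that ever reach the receiver.) -/
open Real MeasureTheory Set

/-!
The substitution `τ = (r - a)² / (4 D u²)` turns the integral into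
`(a / r) (2 / √π) ∫₀^∞ exp (-u² - s² / u²) du` with `s = √(μ / D) (r - a) / 2`, and
`exp (-u² - s² / u²) = exp (-2 s) exp (-(u - s / u)²)`. The Cauchy–Schlömilch transformation
evaluates the last integral: `u ↦ u - s / u` maps `(0, ∞)` bijectively onto `ℝ` with Jacobian
`1 + s / u²`, and the inversion `u ↦ s / u` shows that the `s / u²` part of the Jacobian
contributes as much as the `1` part, so `∫₀^∞ g (u - s / u) du = ½ ∫ g` for even integrable `g`.
-/

section PowerInversion

variable {E : Type*} [NormedAddCommGroup E] [NormedSpace ℝ E] {c : ℝ} {n : ℕ}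

lemma hasDerivAt_div_pow (c : ℝ) (n : ℕ) {u : ℝ} (hu : u ≠ 0) :
    HasDerivAt (fun u => c / u ^ n) (-(n * c / u ^ (n + 1))) u := by
  refine ((hasDerivAt_const u c).div (hasDerivAt_pow n u) (pow_ne_zero n hu)).congr_deriv ?_
  rcases n with _ | n
  · simp
  · rw [Nat.add_sub_cancel]; field_simp; ring

lemma strictAntiOn_div_pow (hc : 0 < c) (hn : n ≠ 0) :
    StrictAntiOn (fun u => c / u ^ n) (Ioi 0) := fun _ hx _ _ hxy =>
  div_lt_div_of_pos_left hc (pow_pos hx n) (pow_lt_pow_left₀ hxy (le_of_lt hx) hn)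

lemma image_div_pow_Ioi (hc : 0 < c) (hn : n ≠ 0) :
    (fun u => c / u ^ n) '' Ioi 0 = Ioi 0 := by
  refine Subset.antisymm (image_subset_iff.2 fun u hu => div_pos hc (pow_pos hu n)) fun τ hτ => ?_
  have hcτ : 0 < c / τ := div_pos hc hτ
  refine ⟨(c / τ) ^ (n⁻¹ : ℝ), rpow_pos_of_pos hcτ _, ?_⟩
  simp only [rpow_inv_natCast_pow hcτ.le hn, div_div_cancel₀ hc.ne']

lemma abs_neg_div_pow {u : ℝ} (hc : 0 ≤ c) (hu : 0 ≤ u) :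
    |-(n * c / u ^ (n + 1))| = n * c / u ^ (n + 1) := by
  rw [abs_neg, abs_of_nonneg (by positivity)]

theorem integrableOn_Ioi_comp_div_pow_iff (g : ℝ → E) (hc : 0 < c) (hn : n ≠ 0) :
    IntegrableOn (fun u => (n * c / u ^ (n + 1)) • g (c / u ^ n)) (Ioi 0) ↔
      IntegrableOn g (Ioi 0) := by
  have := integrableOn_image_iff_integrableOn_abs_deriv_smul measurableSet_Ioi
    (fun u hu => (hasDerivAt_div_pow c n (ne_of_gt hu)).hasDerivWithinAt)
    (strictAntiOn_div_pow hc hn).injOn g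
  rw [image_div_pow_Ioi hc hn] at this
  rw [this]
  exact integrableOn_congr_fun (fun u hu => by simp only [abs_neg_div_pow hc.le (le_of_lt hu)])
    measurableSet_Ioi

theorem integral_comp_div_pow_Ioi (g : ℝ → E) (hc : 0 < c) (hn : n ≠ 0) :
    ∫ u in Ioi 0, (n * c / u ^ (n + 1)) • g (c / u ^ n) = ∫ τ in Ioi 0, g τ := by
  have := integral_image_eq_integral_abs_deriv_smul measurableSet_Ioi
    (fun u hu => (hasDerivAt_div_pow c n (ne_of_gt hu)).hasDerivWithinAt)
    (strictAntiOn_div_pow hc hn).injOn g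
  rw [image_div_pow_Ioi hc hn] at this
  rw [this]
  exact setIntegral_congr_fun measurableSet_Ioi fun u hu => by
    simp only [abs_neg_div_pow hc.le (le_of_lt hu)]

end PowerInversion

section CauchySchlomilch

variable {E : Type*} [NormedAddCommGroup E] [NormedSpace ℝ E] {s : ℝ}

lemma hasDerivAt_sub_div (s : ℝ) {u : ℝ} (hu : u ≠ 0) :
    HasDerivAt (fun u => u - s / u) (1 + s / u ^ 2) u := by
  have h := (hasDerivAt_id' u).fun_sub (hasDerivAt_div_pow s 1 hu)
  simp only [pow_one, Nat.cast_one, one_mul, sub_neg_eq_add] at h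
  exact h

lemma strictMonoOn_sub_div (hs : 0 ≤ s) : StrictMonoOn (fun u => u - s / u) (Ioi 0) :=
  fun _ hx _ _ hxy => by
    have := div_le_div_of_nonneg_left hs hx hxy.le
    dsimp only
    linarith

lemma image_sub_div_Ioi (hs : 0 < s) : (fun u => u - s / u) '' Ioi 0 = univ := by
  refine eq_univ_of_forall fun y => ?_
  set R := √(y ^ 2 + 4 * s)
  have hR : R ^ 2 = y ^ 2 + 4 * s := sq_sqrt (by positivity)
  have hyR : 0 < y + R := by nlinarith [sqrt_nonneg (y ^ 2 + 4 * s)]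
  refine ⟨(y + R) / 2, by simp only [mem_Ioi]; linarith, ?_⟩
  field_simp
  linear_combination hR

lemma one_add_div_sq_pos (hs : 0 ≤ s) (u : ℝ) : 0 < 1 + s / u ^ 2 := by positivity

theorem integrableOn_Ioi_comp_sub_div_iff (g : ℝ → E) (hs : 0 < s) :
    IntegrableOn (fun u => (1 + s / u ^ 2) • g (u - s / u)) (Ioi 0) ↔ Integrable g := by
  have := integrableOn_image_iff_integrableOn_abs_deriv_smul measurableSet_Ioi
    (fun u hu => (hasDerivAt_sub_div s (ne_of_gt hu)).hasDerivWithinAt)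
    (strictMonoOn_sub_div hs.le).injOn g
  rw [image_sub_div_Ioi hs, integrableOn_univ] at this
  simp only [this, abs_of_pos (one_add_div_sq_pos hs.le _)]

theorem integral_comp_sub_div_Ioi (g : ℝ → E) (hs : 0 < s) :
    ∫ u in Ioi 0, (1 + s / u ^ 2) • g (u - s / u) = ∫ x, g x := by
  have := integral_image_eq_integral_abs_deriv_smul measurableSet_Ioi
    (fun u hu => (hasDerivAt_sub_div s (ne_of_gt hu)).hasDerivWithinAt)
    (strictMonoOn_sub_div hs.le).injOn g
  rw [image_sub_div_Ioi hs, Measure.restrict_univ] at this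
  simp only [this, abs_of_pos (one_add_div_sq_pos hs.le _)]

theorem MeasureTheory.Integrable.integrableOn_Ioi_comp_sub_div {f : ℝ → E} (hf : Integrable f)
    (hs : 0 < s) :
    IntegrableOn (fun u => f (u - s / u)) (Ioi 0) := by
  have hbound : ∀ u, ‖(1 + s / u ^ 2)⁻¹‖ ≤ 1 := fun u => by
    rw [norm_inv, Real.norm_of_nonneg (one_add_div_sq_pos hs.le u).le]
    exact inv_le_one_of_one_le₀ (le_add_of_nonneg_right (by positivity))
  refine IntegrableOn.congr_fun (((integrableOn_Ioi_comp_sub_div_iff f hs).2 hf).bdd_smul 1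
    (φ := fun u => (1 + s / u ^ 2)⁻¹) (by fun_prop : Measurable _).aestronglyMeasurable
    (ae_of_all _ hbound)) (fun u _ => ?_) measurableSet_Ioi
  simp only [Pi.smul_apply', smul_smul, inv_mul_cancel₀ (one_add_div_sq_pos hs.le u).ne',
    one_smul]

theorem integral_Ioi_comp_sub_div_of_even {f : ℝ → E} (hf : Integrable f)
    (hfe : ∀ x, f (-x) = f x) (hs : 0 < s) :
    (2 : ℝ) • ∫ u in Ioi 0, f (u - s / u) = ∫ x, f x := by
  set F := fun u => f (u - s / u)
  have hswap : ∀ u ∈ Ioi (0 : ℝ),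
      ((1 : ℕ) * s / u ^ (1 + 1)) • F (s / u ^ 1) = (s / u ^ 2) • F u := fun u _ => by
    simp only [F, Nat.cast_one, one_mul, pow_one, div_div_cancel₀ hs.ne', ← neg_sub u, hfe]
  have hF := hf.integrableOn_Ioi_comp_sub_div hs
  have hF' : IntegrableOn (fun u => (s / u ^ 2) • F u) (Ioi 0) :=
    ((integrableOn_Ioi_comp_div_pow_iff F hs one_ne_zero).2 hF).congr_fun hswap measurableSet_Ioi
  calc (2 : ℝ) • ∫ u in Ioi 0, F u
      = (∫ u in Ioi 0, F u) + ∫ u in Ioi 0, (s / u ^ 2) • F u := by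
        rw [← setIntegral_congr_fun measurableSet_Ioi hswap,
          integral_comp_div_pow_Ioi F hs one_ne_zero, two_smul]
    _ = ∫ u in Ioi 0, (1 + s / u ^ 2) • F u := by
        rw [← integral_add hF hF']
        simp only [F, add_smul, one_smul]
    _ = ∫ x, f x := integral_comp_sub_div_Ioi f hs

end CauchySchlomilch

theorem integrableOn_Ioi_exp_neg_sq_sub_div {s : ℝ} (hs : 0 < s) :
    IntegrableOn (fun u => exp (-(u - s / u) ^ 2)) (Ioi 0) := by
  simpa using (integrable_exp_neg_mul_sq one_pos).integrableOn_Ioi_comp_sub_div hs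

theorem integral_Ioi_exp_neg_sq_sub_div {s : ℝ} (hs : 0 < s) :
    ∫ u in Ioi 0, exp (-(u - s / u) ^ 2) = √π / 2 := by
  have := integral_Ioi_comp_sub_div_of_even (integrable_exp_neg_mul_sq one_pos)
    (fun x => by rw [neg_sq]) hs
  rw [integral_gaussian, div_one, smul_eq_mul] at this
  simp only [neg_mul, one_mul] at this
  linarith

section FirstPassage

variable {D x μ : ℝ}

noncomputable def firstPassageDensity (D x τ : ℝ) : ℝ :=
  x / √(4 * π * D * τ ^ 3) * exp (-x ^ 2 / (4 * D * τ))

lemma firstPassageDensity_mul_exp_neg_comp_div_sq (hx : 0 < x) (hD : 0 < D) (hμ : 0 < μ)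
    {u : ℝ} (hu : 0 < u) :
    2 * (x ^ 2 / (4 * D)) / u ^ 3 *
        (firstPassageDensity D x (x ^ 2 / (4 * D) / u ^ 2) *
          exp (-μ * (x ^ 2 / (4 * D) / u ^ 2))) =
      2 / √π * exp (-√(μ / D) * x) * exp (-(u - √(μ / D) * x / 2 / u) ^ 2) := by
  have hsqrt :
      √(4 * π * D * (x ^ 2 / (4 * D) / u ^ 2) ^ 3) = √π * x ^ 3 / (4 * D * u ^ 3) := by
    rw [← sqrt_sq (by positivity : 0 ≤ √π * x ^ 3 / (4 * D * u ^ 3))]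
    congr 1
    rw [div_pow (√π * x ^ 3), mul_pow √π, sq_sqrt pi_pos.le]
    field_simp
  have hμD : D * √(μ / D) ^ 2 = μ := by
    rw [sq_sqrt (by positivity)]
    field_simp
  have hquad : -x ^ 2 / (4 * D * (x ^ 2 / (4 * D) / u ^ 2)) = -u ^ 2 := by
    field_simp
  have hexp : exp (-u ^ 2) * exp (-μ * (x ^ 2 / (4 * D) / u ^ 2)) =
      exp (-√(μ / D) * x) * exp (-(u - √(μ / D) * x / 2 / u) ^ 2) := by
    rw [← exp_add, ← exp_add]
    congr 1
    field_simp
    linear_combination (4 * x ^ 2) * hμD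
  simp only [firstPassageDensity, hsqrt, hquad, mul_assoc (x / _), hexp]
  field_simp

theorem integrableOn_firstPassageDensity_mul_exp_neg (hx : 0 < x) (hD : 0 < D) (hμ : 0 < μ) :
    IntegrableOn (fun τ => firstPassageDensity D x τ * exp (-μ * τ)) (Ioi 0) := by
  rw [← integrableOn_Ioi_comp_div_pow_iff _ (by positivity : 0 < x ^ 2 / (4 * D)) two_ne_zero]
  simp only [Nat.cast_ofNat, smul_eq_mul, Nat.reduceAdd]
  exact IntegrableOn.congr_fun
    ((integrableOn_Ioi_exp_neg_sq_sub_div (s := √(μ / D) * x / 2) (by positivity)).const_mul _)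
    (fun u hu => (firstPassageDensity_mul_exp_neg_comp_div_sq hx hD hμ hu).symm) measurableSet_Ioi

theorem integral_firstPassageDensity_mul_exp_neg (hx : 0 < x) (hD : 0 < D) (hμ : 0 < μ) :
    ∫ τ in Ioi 0, firstPassageDensity D x τ * exp (-μ * τ) = exp (-√(μ / D) * x) := by
  rw [← integral_comp_div_pow_Ioi _ (by positivity : 0 < x ^ 2 / (4 * D)) two_ne_zero]
  simp only [Nat.cast_ofNat, smul_eq_mul, Nat.reduceAdd]
  rw [setIntegral_congr_fun measurableSet_Ioi
      (fun u hu => firstPassageDensity_mul_exp_neg_comp_div_sq hx hD hμ hu),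
    integral_const_mul, integral_Ioi_exp_neg_sq_sub_div (by positivity)]
  field_simp [(sqrt_pos.2 pi_pos).ne']

end FirstPassage

theorem fraction_ever_absorbed_with_degradation_general
    (a D μ r : ℝ) (har : a < r) (hD : 0 < D) (hμ : 0 < μ) :
    IntegrableOn (fun τ : ℝ =>
      (a / r) * ((r - a) / Real.sqrt (4 * Real.pi * D * τ ^ 3)) *
        Real.exp (-(r - a) ^ 2 / (4 * D * τ)) * Real.exp (-μ * τ)) (Set.Ioi 0) ∧
    (∫ τ in Set.Ioi (0 : ℝ),
      (a / r) * ((r - a) / Real.sqrt (4 * Real.pi * D * τ ^ 3)) *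
        Real.exp (-(r - a) ^ 2 / (4 * D * τ)) * Real.exp (-μ * τ))
      = (a / r) * Real.exp (-Real.sqrt (μ / D) * (r - a)) := by
  have hx : 0 < r - a := sub_pos.2 har
  have hκ : (fun τ : ℝ => (a / r) * ((r - a) / √(4 * π * D * τ ^ 3)) *
      exp (-(r - a) ^ 2 / (4 * D * τ)) * exp (-μ * τ)) =
      fun τ => a / r * (firstPassageDensity D (r - a) τ * exp (-μ * τ)) := by
    funext τ
    simp only [firstPassageDensity, mul_assoc]
  rw [hκ, integral_const_mul, integral_firstPassageDensity_mul_exp_neg hx hD hμ]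
  exact ⟨(integrableOn_firstPassageDensity_mul_exp_neg hx hD hμ).const_mul _, rfl⟩

/-- For 0 < a < r, D > 0, μ > 0, the improper integral of the
degradation-weighted hitting rate converges and
∫₀^∞ (a/r)·((r−a)/√(4πDτ³))·exp(−(r−a)²/(4Dτ))·exp(−μτ) dτ
  = (a/r)·exp(−√(μ/D)·(r−a)). -/
theorem fraction_ever_absorbed_with_degradation
    (a D μ r : ℝ) (ha : 0 < a) (har : a < r) (hD : 0 < D) (hμ : 0 < μ) :
    IntegrableOn (fun τ : ℝ =>
      (a / r) * ((r - a) / Real.sqrt (4 * Real.pi * D * τ ^ 3)) *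
        Real.exp (-(r - a) ^ 2 / (4 * D * τ)) * Real.exp (-μ * τ)) (Set.Ioi 0) ∧
    (∫ τ in Set.Ioi (0 : ℝ),
      (a / r) * ((r - a) / Real.sqrt (4 * Real.pi * D * τ ^ 3)) *
        Real.exp (-(r - a) ^ 2 / (4 * D * τ)) * Real.exp (-μ * τ))
      = (a / r) * Real.exp (-Real.sqrt (μ / D) * (r - a)) :=
  fraction_ever_absorbed_with_degradation_general a D μ r har hD hμ
end

section
/- Let a, D, μ, r, t be real numbers with 0 < a < r, D > 0, μ > 0 and t > 0. Then ∫₀ᵗ (a/r) · ((r − a)/√(4π D τ³)) · exp(−(r − a)²/(4 D τ)) · exp(−μ τ) dτ = (a/(2r)) · [ exp(−√(μ/D) · (r − a)) · erfc((r − a)/√(4 D t) − √(μ t)) + exp(√(μ/D) · (r − a)) · erfc((r − a)/√(4 D t) + √(μ t)) ]. (This is the closed form of the channel impulse response f(t, r) with molecular degradation.) -/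
open Real MeasureTheory

/-- The complementary error function: erfc x = (2/√π) ∫ₓ^∞ exp(−u²) du. -/
noncomputable def erfc (x : ℝ) : ℝ :=
  (2 / Real.sqrt Real.pi) * ∫ u in Set.Ioi x, Real.exp (-u ^ 2)

/-!
The right-hand side `G(t)` is an antiderivative of the integrand on `(0, ∞)`. With
`u = (r - a) / √(4Dτ)` and `v = √(μτ)` the product `2uv = √(μ/D) (r - a)` does not depend on `τ`,
so differentiating the two `erfc` terms yields the same Gaussian factor
`exp (-(u² + v²)) = exp (-(r - a)² / (4Dτ)) exp (-μτ)` twice and the contributions of `v'` cancel.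
As `τ → 0⁺` both `u ± v → ∞`, so `G → 0`. The integrand is nonnegative, hence integrable near `0`,
and the fundamental theorem of calculus gives `∫₀ᵗ = G(t) - 0`.
-/

open Set Filter Topology

namespace intervalIntegral

theorem integral_eq_sub_of_hasDerivAt_of_tendsto_of_nonneg {f f' : ℝ → ℝ} {a b fa : ℝ}
    (hab : a < b) (hderiv : ∀ x ∈ Ioc a b, HasDerivAt f (f' x) x)
    (hpos : ∀ x ∈ Ioo a b, 0 ≤ f' x) (ha : Tendsto f (𝓝[>] a) (𝓝 fa)) :
    ∫ y in a..b, f' y = f b - fa := by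
  have hcont : ContinuousOn (Function.update f a fa) (Icc a b) := by
    rw [continuousOn_update_iff, Icc_sdiff_left]
    exact ⟨fun x hx ↦ (hderiv x hx).continuousAt.continuousWithinAt,
      fun _ ↦ ha.mono_left (nhdsWithin_mono _ Ioc_subset_Ioi_self)⟩
  have hint : IntegrableOn f' (Ioc a b) := by
    refine integrableOn_deriv_of_nonneg hcont (fun x hx ↦ ?_) hpos
    refine (hderiv x (Ioo_subset_Ioc_self hx)).congr_of_eventuallyEq ?_
    filter_upwards [Ioi_mem_nhds hx.1] with y hy using Function.update_of_ne hy.ne' _ _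
  exact integral_eq_sub_of_hasDerivAt_of_tendsto hab
    (fun x hx ↦ hderiv x (Ioo_subset_Ioc_self hx))
    ((intervalIntegrable_iff_integrableOn_Ioc_of_le hab.le).2 hint) ha
    ((hderiv b (right_mem_Ioc.2 hab)).continuousAt.tendsto.mono_left nhdsWithin_le_nhds)

end intervalIntegral

theorem hasDerivAt_integral_Ioi {E : Type*} [NormedAddCommGroup E] [NormedSpace ℝ E]
    [CompleteSpace E] {f : ℝ → E} {x : ℝ} (hf : Integrable f) (hfx : ContinuousAt f x) :
    HasDerivAt (fun y ↦ ∫ t in Ioi y, f t) (-f x) x := by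
  have hsplit : (fun y ↦ ∫ t in Ioi y, f t) = fun y ↦ (∫ t in Ioi 0, f t) - ∫ t in 0..y, f t := by
    ext y
    rw [← intervalIntegral.integral_Ioi_sub_Ioi' hf.integrableOn hf.integrableOn, sub_sub_cancel]
  rw [hsplit]
  exact (intervalIntegral.integral_hasDerivAt_right hf.intervalIntegrable
    hf.aestronglyMeasurable.stronglyMeasurableAtFilter hfx).const_sub _

theorem hasDerivAt_erfc (x : ℝ) : HasDerivAt erfc (-(2 / √π) * exp (-x ^ 2)) x := by
  have hgauss : Integrable fun u : ℝ ↦ exp (-u ^ 2) := by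
    simpa using integrable_exp_neg_mul_sq one_pos
  rw [neg_mul, ← mul_neg]
  exact (hasDerivAt_integral_Ioi hgauss (by fun_prop)).const_mul _

theorem tendsto_erfc_atTop : Tendsto erfc atTop (𝓝 0) := by
  have h := (tendsto_integral_Ioi_zero (f := fun u : ℝ ↦ exp (-u ^ 2)) (μ := volume)
    tendsto_id).const_mul (2 / √π)
  rwa [mul_zero] at h

theorem hasDerivAt_erfc_pair {u v : ℝ → ℝ} {u' v' c x : ℝ} (hu : HasDerivAt u u' x)
    (hv : HasDerivAt v v' x) (hc : c = 2 * u x * v x) :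
    HasDerivAt (fun y ↦ exp (-c) * erfc (u y - v y) + exp c * erfc (u y + v y))
      (-(4 / √π) * exp (-(u x ^ 2 + v x ^ 2)) * u') x := by
  have hminus : exp (-c) * exp (-(u x - v x) ^ 2) = exp (-(u x ^ 2 + v x ^ 2)) := by
    rw [← exp_add, hc]; ring_nf
  have hplus : exp c * exp (-(u x + v x) ^ 2) = exp (-(u x ^ 2 + v x ^ 2)) := by
    rw [← exp_add, hc]; ring_nf
  refine ((((hasDerivAt_erfc _).comp x (hu.sub hv)).const_mul (exp (-c))).add
    (((hasDerivAt_erfc _).comp x (hu.add hv)).const_mul (exp c))).congr_deriv ?_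
  simp only [Pi.sub_apply, Pi.add_apply]
  linear_combination -2 / √π * (u' - v') * hminus - 2 / √π * (u' + v') * hplus

noncomputable def hittingRate (a D r τ : ℝ) : ℝ :=
  (a / r) * ((r - a) / √(4 * π * D * τ ^ 3)) * exp (-(r - a) ^ 2 / (4 * D * τ))

noncomputable def degradedHittingFraction (a D μ r t : ℝ) : ℝ :=
  (a / (2 * r)) *
    (exp (-√(μ / D) * (r - a)) * erfc ((r - a) / √(4 * D * t) - √(μ * t)) +
      exp (√(μ / D) * (r - a)) * erfc ((r - a) / √(4 * D * t) + √(μ * t)))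

theorem hittingRate_nonneg {a D r τ : ℝ} (ha : 0 ≤ a) (har : a ≤ r) : 0 ≤ hittingRate a D r τ := by
  have hra : 0 ≤ r - a := sub_nonneg.2 har
  have hr : 0 ≤ r := ha.trans har
  unfold hittingRate
  positivity

theorem hasDerivAt_div_sqrt_mul (b : ℝ) {c x : ℝ} (hc : 0 < c) (hx : 0 < x) :
    HasDerivAt (fun y ↦ b / √(c * y)) (-(b / √(c * x)) / (2 * x)) x := by
  have hcx : 0 < c * x := mul_pos hc hx
  have hsqrt : √(c * x) ≠ 0 := (sqrt_pos.2 hcx).ne'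
  refine ((hasDerivAt_const x b).div (((hasDerivAt_id' x).const_mul c).sqrt hcx.ne')
    hsqrt).congr_deriv ?_
  field_simp
  rw [sq_sqrt hcx.le]
  ring

theorem two_mul_div_sqrt_mul_sqrt (b : ℝ) {D μ τ : ℝ} (hD : 0 < D) (hμ : 0 ≤ μ) (hτ : 0 < τ) :
    2 * (b / √(4 * D * τ)) * √(μ * τ) = √(μ / D) * b := by
  have h : √(μ * τ) / √(4 * D * τ) = √(μ / D) / 2 := by
    rw [← sqrt_div (by positivity), show μ * τ / (4 * D * τ) = μ / D / 2 ^ 2 by field_simp; ring,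
      sqrt_div' _ (by positivity), sqrt_sq zero_le_two]
  rw [mul_assoc, div_mul_eq_mul_div, mul_div_assoc, h]
  ring

theorem hasDerivAt_degradedHittingFraction (a r : ℝ) {D μ τ : ℝ} (hD : 0 < D) (hμ : 0 < μ)
    (hτ : 0 < τ) :
    HasDerivAt (degradedHittingFraction a D μ r) (hittingRate a D r τ * exp (-μ * τ)) τ := by
  have hpair := hasDerivAt_erfc_pair
    (hasDerivAt_div_sqrt_mul (r - a) (by positivity : 0 < 4 * D) hτ)
    (((hasDerivAt_id' τ).const_mul μ).sqrt (by positivity))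
    (two_mul_div_sqrt_mul_sqrt (r - a) hD hμ.le hτ).symm
  rw [← neg_mul] at hpair
  refine (hpair.const_mul (a / (2 * r))).congr_deriv ?_
  have hu : ((r - a) / √(4 * D * τ)) ^ 2 = (r - a) ^ 2 / (4 * D * τ) := by
    rw [div_pow, sq_sqrt (by positivity)]
  have hsplit : √(4 * π * D * τ ^ 3) = √π * √(4 * D * τ) * τ := by
    rw [show 4 * π * D * τ ^ 3 = π * (4 * D * τ) * τ ^ 2 by ring, sqrt_mul (by positivity),
      sqrt_mul pi_pos.le, sqrt_sq hτ.le]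
  have : 0 < √(4 * D * τ) := sqrt_pos.2 (by positivity)
  have : 0 < √π := sqrt_pos.2 pi_pos
  simp only [hu, sq_sqrt (by positivity : 0 ≤ μ * τ), hittingRate, hsplit, neg_add, exp_add]
  field_simp
  ring

theorem tendsto_degradedHittingFraction_zero (μ : ℝ) {a D r : ℝ} (har : a < r) (hD : 0 < D) :
    Tendsto (degradedHittingFraction a D μ r) (𝓝[>] 0) (𝓝 0) := by
  have hsqrt : Tendsto (fun τ ↦ √(4 * D * τ)) (𝓝[>] 0) (𝓝[>] 0) := by
    refine tendsto_nhdsWithin_of_tendsto_nhds_of_eventually_within _ ?_ ?_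
    · have hc : Continuous fun τ : ℝ ↦ √(4 * D * τ) := by fun_prop
      exact (hc.tendsto' 0 0 (by simp)).mono_left nhdsWithin_le_nhds
    · filter_upwards [self_mem_nhdsWithin] with τ (hτ : 0 < τ)
      exact sqrt_pos.2 (by positivity)
  have hu : Tendsto (fun τ ↦ (r - a) / √(4 * D * τ)) (𝓝[>] 0) atTop := by
    simpa only [div_eq_mul_inv, Function.comp_def] using
      (tendsto_inv_nhdsGT_zero.comp hsqrt).const_mul_atTop (sub_pos.2 har)
  have hv : Tendsto (fun τ ↦ √(μ * τ)) (𝓝[>] 0) (𝓝 0) := by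
    have hc : Continuous fun τ : ℝ ↦ √(μ * τ) := by fun_prop
    exact (hc.tendsto' 0 0 (by simp)).mono_left nhdsWithin_le_nhds
  have hminus := tendsto_erfc_atTop.comp (hu.atTop_add hv.neg)
  have hplus := tendsto_erfc_atTop.comp (hu.atTop_add hv)
  have h := ((hminus.const_mul (exp (-√(μ / D) * (r - a)))).add
    (hplus.const_mul (exp (√(μ / D) * (r - a))))).const_mul (a / (2 * r))
  simp only [Function.comp_def, ← sub_eq_add_neg, mul_zero, add_zero] at h
  exact h

/-- closed form of the channel impulse response with degradation:
∫₀ᵗ (a/r)·((r−a)/√(4πDτ³))·exp(−(r−a)²/(4Dτ))·exp(−μτ) dτ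
 = (a/(2r))·[exp(−√(μ/D)(r−a))·erfc((r−a)/√(4Dt) − √(μt))
            + exp(√(μ/D)(r−a))·erfc((r−a)/√(4Dt) + √(μt))]. -/
theorem cir_closed_form_with_degradation
    (a D μ r t : ℝ) (ha : 0 < a) (har : a < r) (hD : 0 < D) (hμ : 0 < μ) (ht : 0 < t) :
    (∫ τ in (0 : ℝ)..t,
      (a / r) * ((r - a) / Real.sqrt (4 * Real.pi * D * τ ^ 3)) *
        Real.exp (-(r - a) ^ 2 / (4 * D * τ)) * Real.exp (-μ * τ))
      = (a / (2 * r)) *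
        (Real.exp (-Real.sqrt (μ / D) * (r - a)) *
            erfc ((r - a) / Real.sqrt (4 * D * t) - Real.sqrt (μ * t)) +
          Real.exp (Real.sqrt (μ / D) * (r - a)) *
            erfc ((r - a) / Real.sqrt (4 * D * t) + Real.sqrt (μ * t))) := by
  have hftc := intervalIntegral.integral_eq_sub_of_hasDerivAt_of_tendsto_of_nonneg ht
    (fun τ hτ ↦ hasDerivAt_degradedHittingFraction a r hD hμ hτ.1)
    (fun τ _ ↦ mul_nonneg (hittingRate_nonneg ha.le har.le) (exp_pos _).le)
    (tendsto_degradedHittingFraction_zero μ har hD)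
  rwa [sub_zero] at hftc
end
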